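/- arXiv:1809.04311 — 2 statements merged into one kernel-verified Lean document; each statement's English description precedes it below -/
import Mathlib

section
/- For sequences v in the weighted Hilbert space H_ρ with norm ‖v‖_ρ² = Σ_{j∈ℤ} cosh(2jρ)‖v_j‖², if 0 ≤ ρ < ϱ and v ∈ H_ϱ is nonzero with ‖v‖_ϱ ≤ C‖v‖_ρ, and n is large enough that cosh(2ϱn) > C²cosh(2ρn), then the tail satisfies ‖(I−P_n)v‖_ρ ≤ ( cosh(2ρn)(C²−1) / (cosh(2ϱn) − C²cosh(2ρn)) )^{1/2} ‖P_n v‖_ρ, where P_n truncates to indices −n < j ≤ n. -/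
private lemma cosh_ratio (ρ ϱ a b : ℝ) (hρ : 0 ≤ ρ) (hρϱ : ρ ≤ ϱ) (ha : 0 ≤ a) (hab : a ≤ b) :
    Real.cosh (a * ϱ) * Real.cosh (b * ρ) ≤ Real.cosh (b * ϱ) * Real.cosh (a * ρ) := by
  have hϱ : 0 ≤ ϱ := le_trans hρ hρϱ
  have hb : 0 ≤ b := le_trans ha hab
  have key : ∀ x y : ℝ, Real.cosh x * Real.cosh y
      = (Real.cosh (x + y) + Real.cosh (x - y)) / 2 := by
    intro x y
    have h1 := Real.cosh_add x y
    have h2 := Real.cosh_sub x y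
    linarith
  rw [key, key]
  have h1 : Real.cosh (a * ϱ + b * ρ) ≤ Real.cosh (b * ϱ + a * ρ) := by
    rw [Real.cosh_le_cosh, abs_of_nonneg (by positivity), abs_of_nonneg (by positivity)]
    nlinarith
  have h2 : Real.cosh (a * ϱ - b * ρ) ≤ Real.cosh (b * ϱ - a * ρ) := by
    rw [Real.cosh_le_cosh, abs_of_nonneg (by nlinarith : (0:ℝ) ≤ b * ϱ - a * ρ), abs_le]
    constructor <;> nlinarith
  linarith

/-- Tail bound for the weighted spaces `H_ρ` with
`‖v‖_ρ² = ∑_{j∈ℤ} cosh(2jρ)‖v_j‖²` and truncation `P_n` onto indices `-n < j ≤ n`. -/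
theorem stmt_0 {h : Type*} [NormedAddCommGroup h]
    (ρ ϱ C : ℝ) (hρ : 0 ≤ ρ) (hρϱ : ρ < ϱ) (hC : 0 ≤ C)
    (v : ℤ → h) (hv : v ≠ 0)
    (hsum : Summable fun j : ℤ => Real.cosh (2 * (j : ℝ) * ϱ) * ‖v j‖ ^ 2)
    (hCbound :
      Real.sqrt (∑' j : ℤ, Real.cosh (2 * (j : ℝ) * ϱ) * ‖v j‖ ^ 2) ≤
        C * Real.sqrt (∑' j : ℤ, Real.cosh (2 * (j : ℝ) * ρ) * ‖v j‖ ^ 2))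
    (n : ℕ) (hn : 0 < n)
    (hbig : C ^ 2 * Real.cosh (2 * (n : ℝ) * ρ) < Real.cosh (2 * (n : ℝ) * ϱ)) :
    Real.sqrt (∑' j : ℤ,
        if -(n : ℤ) < j ∧ j ≤ (n : ℤ) then 0
        else Real.cosh (2 * (j : ℝ) * ρ) * ‖v j‖ ^ 2) ≤
      Real.sqrt (Real.cosh (2 * (n : ℝ) * ρ) * (C ^ 2 - 1) /
          (Real.cosh (2 * (n : ℝ) * ϱ) - C ^ 2 * Real.cosh (2 * (n : ℝ) * ρ))) *
        Real.sqrt (∑' j : ℤ,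
          if -(n : ℤ) < j ∧ j ≤ (n : ℤ) then Real.cosh (2 * (j : ℝ) * ρ) * ‖v j‖ ^ 2
          else 0) := by
  classical
  have hϱ0 : 0 ≤ ϱ := le_trans hρ hρϱ.le
  let f : ℤ → ℝ := fun j => Real.cosh (2 * (j : ℝ) * ρ) * ‖v j‖ ^ 2
  let g : ℤ → ℝ := fun j => Real.cosh (2 * (j : ℝ) * ϱ) * ‖v j‖ ^ 2
  have hfnn : ∀ j, 0 ≤ f j := fun j => by positivity
  have hgnn : ∀ j, 0 ≤ g j := fun j => by positivity
  have hfg : ∀ j, f j ≤ g j := by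
    intro j
    have : Real.cosh (2 * (j : ℝ) * ρ) ≤ Real.cosh (2 * (j : ℝ) * ϱ) := by
      rw [Real.cosh_le_cosh, abs_mul (2*(j:ℝ)) ρ, abs_mul (2*(j:ℝ)) ϱ, abs_of_nonneg hρ, abs_of_nonneg hϱ0]
      exact mul_le_mul_of_nonneg_left hρϱ.le (abs_nonneg _)
    exact mul_le_mul_of_nonneg_right this (by positivity)
  have hsumf : Summable f := hsum.of_nonneg_of_le hfnn hfg
  -- nonnegativity and summability of the pieces
  have nn_in : ∀ (u : ℤ → ℝ), (∀ j, 0 ≤ u j) → ∀ j : ℤ,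
      0 ≤ (if -(n : ℤ) < j ∧ j ≤ (n : ℤ) then u j else 0) := by
    intro u hu j; split <;> simp [hu j]
  have nn_out : ∀ (u : ℤ → ℝ), (∀ j, 0 ≤ u j) → ∀ j : ℤ,
      0 ≤ (if -(n : ℤ) < j ∧ j ≤ (n : ℤ) then 0 else u j) := by
    intro u hu j; split <;> simp [hu j]
  have le_in : ∀ (u : ℤ → ℝ), (∀ j, 0 ≤ u j) → ∀ j : ℤ,
      (if -(n : ℤ) < j ∧ j ≤ (n : ℤ) then u j else 0) ≤ u j := by
    intro u hu j; split
    · exact le_rfl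
    · exact hu j
  have le_out : ∀ (u : ℤ → ℝ), (∀ j, 0 ≤ u j) → ∀ j : ℤ,
      (if -(n : ℤ) < j ∧ j ≤ (n : ℤ) then 0 else u j) ≤ u j := by
    intro u hu j; split
    · exact hu j
    · exact le_rfl
  have hsum_in_f : Summable (fun j : ℤ => if -(n : ℤ) < j ∧ j ≤ (n : ℤ) then f j else 0) :=
    hsumf.of_nonneg_of_le (nn_in f hfnn) (le_in f hfnn)
  have hsum_out_f : Summable (fun j : ℤ => if -(n : ℤ) < j ∧ j ≤ (n : ℤ) then 0 else f j) :=
    hsumf.of_nonneg_of_le (nn_out f hfnn) (le_out f hfnn)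
  have hsum_in_g : Summable (fun j : ℤ => if -(n : ℤ) < j ∧ j ≤ (n : ℤ) then g j else 0) :=
    hsum.of_nonneg_of_le (nn_in g hgnn) (le_in g hgnn)
  have hsum_out_g : Summable (fun j : ℤ => if -(n : ℤ) < j ∧ j ≤ (n : ℤ) then 0 else g j) :=
    hsum.of_nonneg_of_le (nn_out g hgnn) (le_out g hgnn)
  set Iρ := ∑' j : ℤ, if -(n : ℤ) < j ∧ j ≤ (n : ℤ) then f j else 0 with hIρ
  set Tρ := ∑' j : ℤ, if -(n : ℤ) < j ∧ j ≤ (n : ℤ) then 0 else f j with hTρ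
  set Iϱ := ∑' j : ℤ, if -(n : ℤ) < j ∧ j ≤ (n : ℤ) then g j else 0 with hIϱ
  set Tϱ := ∑' j : ℤ, if -(n : ℤ) < j ∧ j ≤ (n : ℤ) then 0 else g j with hTϱ
  have hIρnn : 0 ≤ Iρ := tsum_nonneg (nn_in f hfnn)
  have hTρnn : 0 ≤ Tρ := tsum_nonneg (nn_out f hfnn)
  have hsplitf : (∑' j, f j) = Iρ + Tρ := by
    rw [hIρ, hTρ, ← Summable.tsum_add hsum_in_f hsum_out_f]
    refine tsum_congr fun j => ?_
    split <;> simp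
  have hsplitg : (∑' j, g j) = Iϱ + Tϱ := by
    rw [hIϱ, hTϱ, ← Summable.tsum_add hsum_in_g hsum_out_g]
    refine tsum_congr fun j => ?_
    split <;> simp
  obtain ⟨j0, hj0⟩ : ∃ j, v j ≠ 0 := by
    by_contra hcon; push_neg at hcon; exact hv (funext fun j => hcon j)
  have hSρpos : 0 < ∑' j, f j := by
    refine Summable.tsum_pos hsumf hfnn j0 ?_
    have : 0 < ‖v j0‖ := norm_pos_iff.mpr hj0
    positivity
  have hSgeq : (∑' j, f j) ≤ ∑' j, g j := Summable.tsum_le_tsum hfg hsumf hsum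
  have hSbound : (∑' j, g j) ≤ C ^ 2 * ∑' j, f j := by
    have h1 : (0:ℝ) ≤ ∑' j, g j := tsum_nonneg hgnn
    have h2 : (0:ℝ) ≤ ∑' j, f j := tsum_nonneg hfnn
    have hsq := mul_self_le_mul_self (Real.sqrt_nonneg _) hCbound
    rw [Real.mul_self_sqrt h1] at hsq
    calc (∑' j, g j) ≤ C * Real.sqrt (∑' j, f j) * (C * Real.sqrt (∑' j, f j)) := hsq
      _ = C ^ 2 * (Real.sqrt (∑' j, f j) * Real.sqrt (∑' j, f j)) := by ring
      _ = C ^ 2 * ∑' j, f j := by rw [Real.mul_self_sqrt h2]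
  have hC1 : 1 ≤ C ^ 2 := by nlinarith
  have hI : Iρ ≤ Iϱ := by
    refine Summable.tsum_le_tsum (fun j => ?_) hsum_in_f hsum_in_g
    split
    · exact hfg j
    · exact le_rfl
  set cρ := Real.cosh (2 * (n : ℝ) * ρ) with hcρ
  set cϱ := Real.cosh (2 * (n : ℝ) * ϱ) with hcϱ
  have hcρpos : 0 < cρ := Real.cosh_pos _
  have hcϱpos : 0 < cϱ := Real.cosh_pos _
  have hT : cϱ * Tρ ≤ cρ * Tϱ := by
    rw [hTρ, hTϱ, ← tsum_mul_left, ← tsum_mul_left]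
    refine Summable.tsum_le_tsum (fun j => ?_) (hsum_out_f.mul_left _) (hsum_out_g.mul_left _)
    by_cases hj : -(n : ℤ) < j ∧ j ≤ (n : ℤ)
    · rw [if_pos hj, if_pos hj, mul_zero, mul_zero]
    · rw [if_neg hj, if_neg hj]
      have habs : (n : ℝ) ≤ |(j : ℝ)| := by
        push_neg at hj
        rcases le_or_gt j (-(n:ℤ)) with h1 | h1
        · have h2 : (j : ℝ) ≤ -(n : ℝ) := by exact_mod_cast h1
          rw [abs_of_nonpos (by linarith [Nat.cast_nonneg (α := ℝ) n])]; linarith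
        · have h2 := hj h1
          have h3 : (n : ℝ) < (j : ℝ) := by exact_mod_cast h2
          rw [abs_of_nonneg (by linarith [Nat.cast_nonneg (α := ℝ) n])]; linarith
      have key : cϱ * Real.cosh (2 * (j:ℝ) * ρ) ≤ cρ * Real.cosh (2 * (j:ℝ) * ϱ) := by
        have hkey := cosh_ratio ρ ϱ (2 * (n:ℝ)) (2 * |(j:ℝ)|) hρ hρϱ.le (by positivity)
          (by linarith)
        have e1 : Real.cosh (2 * |(j:ℝ)| * ρ) = Real.cosh (2 * (j:ℝ) * ρ) := by
          rw [show 2 * |(j:ℝ)| * ρ = |2 * (j:ℝ) * ρ| by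
            rw [abs_mul, abs_mul, abs_of_nonneg hρ, abs_of_nonneg (by norm_num : (0:ℝ) ≤ 2)],
            Real.cosh_abs]
        have e2 : Real.cosh (2 * |(j:ℝ)| * ϱ) = Real.cosh (2 * (j:ℝ) * ϱ) := by
          rw [show 2 * |(j:ℝ)| * ϱ = |2 * (j:ℝ) * ϱ| by
            rw [abs_mul, abs_mul, abs_of_nonneg hϱ0, abs_of_nonneg (by norm_num : (0:ℝ) ≤ 2)],
            Real.cosh_abs]
        rw [e1, e2] at hkey
        rw [hcρ, hcϱ]
        linarith
      calc cϱ * (Real.cosh (2 * (j:ℝ) * ρ) * ‖v j‖ ^ 2)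
          = (cϱ * Real.cosh (2 * (j:ℝ) * ρ)) * ‖v j‖ ^ 2 := by ring
        _ ≤ (cρ * Real.cosh (2 * (j:ℝ) * ϱ)) * ‖v j‖ ^ 2 :=
            mul_le_mul_of_nonneg_right key (by positivity)
        _ = cρ * (Real.cosh (2 * (j:ℝ) * ϱ) * ‖v j‖ ^ 2) := by ring
  have hmain : (cϱ - C ^ 2 * cρ) * Tρ ≤ cρ * (C ^ 2 - 1) * Iρ := by
    have h1 : Iϱ + Tϱ ≤ C ^ 2 * (Iρ + Tρ) := by rw [← hsplitg, ← hsplitf]; exact hSbound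
    nlinarith
  have hDpos : 0 < cϱ - C ^ 2 * cρ := by linarith
  have hTK : Tρ ≤ cρ * (C ^ 2 - 1) / (cϱ - C ^ 2 * cρ) * Iρ := by
    rw [div_mul_eq_mul_div, le_div_iff₀ hDpos]
    linarith [hmain]
  calc Real.sqrt Tρ ≤ Real.sqrt (cρ * (C ^ 2 - 1) / (cϱ - C ^ 2 * cρ) * Iρ) :=
        Real.sqrt_le_sqrt hTK
    _ = Real.sqrt (cρ * (C ^ 2 - 1) / (cϱ - C ^ 2 * cρ)) * Real.sqrt Iρ := by
        rw [Real.sqrt_mul (div_nonneg (mul_nonneg hcρpos.le (by linarith)) hDpos.le)]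
end

section
/- Consider the linear ODE v̇ = X(t)v on a Hilbert space, with X(t) = [[0, I], [−H(t), 0]] where H(t) is self-adjoint and ‖H(t) − I‖ ≤ 2c for all t. Then the solution satisfies ‖v(t)‖ ≤ e^{c|t|}‖v(0)‖, i.e., the time-t flow map Φ(t) satisfies ‖Φ(t)‖ ≤ e^{c|t|}. -/
/-!
The energy `‖v‖² + ‖ν‖²` has derivative `2 Re⟪ν, (1 - H(t)) v⟫`, which is bounded in absolute
value by `2c (‖v‖² + ‖ν‖²)` (Cauchy–Schwarz and AM–GM). Grönwall's inequality, applied forward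
and backward in time, bounds the energy by `e^{2c|t|}` times its initial value.
-/

open Real

theorem abs_le_exp_mul_of_abs_deriv_le {g g' : ℝ → ℝ} {K : ℝ}
    (hg : ∀ t, HasDerivAt g (g' t) t) (bound : ∀ t, |g' t| ≤ K * |g t|) {t : ℝ} (ht : 0 ≤ t) :
    |g t| ≤ exp (K * t) * |g 0| := by
  have := norm_le_gronwallBound_of_norm_deriv_right_le (ε := 0) (a := 0) (b := t)
    (fun s _ => (hg s).continuousAt.continuousWithinAt) (fun s _ => (hg s).hasDerivWithinAt)
    le_rfl (fun s _ => by simpa using bound s) t ⟨ht, le_rfl⟩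
  simpa [gronwallBound_ε0, mul_comm] using this

theorem abs_le_exp_mul_abs_of_abs_deriv_le {g g' : ℝ → ℝ} {K : ℝ}
    (hg : ∀ t, HasDerivAt g (g' t) t) (bound : ∀ t, |g' t| ≤ K * |g t|) (t : ℝ) :
    |g t| ≤ exp (K * |t|) * |g 0| := by
  rcases le_total 0 t with ht | ht
  · simpa [abs_of_nonneg ht] using abs_le_exp_mul_of_abs_deriv_le hg bound ht
  · have hrev : ∀ s, HasDerivAt (fun s => g (-s)) (-g' (-s)) s := fun s => by
      simpa [Function.comp_def] using (hg (-s)).scomp s (hasDerivAt_neg s)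
    simpa [abs_of_nonpos ht] using
      abs_le_exp_mul_of_abs_deriv_le hrev (fun s => by simpa using bound (-s)) (neg_nonneg.2 ht)

theorem abs_energy_deriv_le {E : Type*} [NormedAddCommGroup E] [InnerProductSpace ℝ E]
    {K : ℝ} (hK : 0 ≤ K) {x y z : E} (h : ‖x - z‖ ≤ K * ‖x‖) :
    |2 * inner ℝ x y + 2 * inner ℝ y (-z)| ≤ K * (‖x‖ ^ 2 + ‖y‖ ^ 2) := by
  have hsplit : 2 * inner ℝ x y + 2 * inner ℝ y (-z) = 2 * inner ℝ y (x - z) := by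
    rw [inner_neg_right, inner_sub_right, real_inner_comm x y]
    ring
  rw [hsplit, abs_mul, abs_two]
  calc 2 * |inner ℝ y (x - z)| ≤ 2 * (‖y‖ * (K * ‖x‖)) := by
        gcongr
        exact (abs_real_inner_le_norm _ _).trans (by gcongr)
    _ ≤ K * (‖x‖ ^ 2 + ‖y‖ ^ 2) := by nlinarith [mul_nonneg hK (sq_nonneg (‖x‖ - ‖y‖))]

theorem energy_le_exp_mul_abs {E : Type*} [NormedAddCommGroup E] [InnerProductSpace ℝ E]
    {A : ℝ → E → E} {K : ℝ} (hK : 0 ≤ K) (hA : ∀ t x, ‖x - A t x‖ ≤ K * ‖x‖)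
    {v ν : ℝ → E} (hv : ∀ t, HasDerivAt v (ν t) t)
    (hν : ∀ t, HasDerivAt ν (-A t (v t)) t) (t : ℝ) :
    ‖v t‖ ^ 2 + ‖ν t‖ ^ 2 ≤ exp (K * |t|) * (‖v 0‖ ^ 2 + ‖ν 0‖ ^ 2) := by
  have hE : ∀ s, |‖v s‖ ^ 2 + ‖ν s‖ ^ 2| = ‖v s‖ ^ 2 + ‖ν s‖ ^ 2 := fun s =>
    abs_of_nonneg (by positivity)
  have := abs_le_exp_mul_abs_of_abs_deriv_le (g := fun s => ‖v s‖ ^ 2 + ‖ν s‖ ^ 2)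
    (fun s => (hv s).norm_sq.add (hν s).norm_sq)
    (fun s => (hE s).symm ▸ abs_energy_deriv_le hK (hA s (v s))) t
  rwa [hE, hE] at this

theorem stmt_12_general {H : Type*} [NormedAddCommGroup H] [InnerProductSpace ℂ H]
    (Ht : ℝ → H →L[ℂ] H)
    (c : ℝ) (hc : 0 ≤ c)
    (hnorm : ∀ t : ℝ, ‖Ht t - 1‖ ≤ 2 * c)
    (v ν : ℝ → H)
    (hv : ∀ t : ℝ, HasDerivAt v (ν t) t)
    (hν : ∀ t : ℝ, HasDerivAt ν (-(Ht t (v t))) t) :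
    ∀ t : ℝ,
      Real.sqrt (‖v t‖ ^ 2 + ‖ν t‖ ^ 2) ≤
        Real.exp (c * |t|) * Real.sqrt (‖v 0‖ ^ 2 + ‖ν 0‖ ^ 2) := by
  let _ : InnerProductSpace ℝ H := InnerProductSpace.complexToReal
  intro t
  have hA : ∀ s x, ‖x - Ht s x‖ ≤ 2 * c * ‖x‖ := fun s x =>
    calc ‖x - Ht s x‖ = ‖(Ht s - 1) x‖ := by simp [norm_sub_rev]
      _ ≤ 2 * c * ‖x‖ := (Ht s - 1).le_of_opNorm_le (hnorm s) x
  have hsqrt : √(exp (2 * c * |t|)) = exp (c * |t|) := by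
    rw [← exp_half]
    ring_nf
  calc √(‖v t‖ ^ 2 + ‖ν t‖ ^ 2)
      ≤ √(exp (2 * c * |t|) * (‖v 0‖ ^ 2 + ‖ν 0‖ ^ 2)) :=
        sqrt_le_sqrt (energy_le_exp_mul_abs (by positivity) hA hv hν t)
    _ = exp (c * |t|) * √(‖v 0‖ ^ 2 + ‖ν 0‖ ^ 2) := by
        rw [sqrt_mul (exp_nonneg _), hsqrt]

/-- For the linear flow `v̇ = ν`, `ν̇ = −H(t)v` with `H(t)` self-adjoint and
`‖H(t) − I‖ ≤ 2c`, solutions satisfy `‖v(t)‖ ≤ e^{c|t|}‖v(0)‖` in the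
Hilbert norm `‖(v,ν)‖ = √(‖v‖² + ‖ν‖²)`. -/
theorem stmt_12 {H : Type*} [NormedAddCommGroup H] [InnerProductSpace ℂ H]
    [CompleteSpace H]
    (Ht : ℝ → H →L[ℂ] H) (hcont : Continuous Ht)
    (hsa : ∀ t : ℝ, IsSelfAdjoint (Ht t))
    (c : ℝ) (hc : 0 ≤ c)
    (hnorm : ∀ t : ℝ, ‖Ht t - 1‖ ≤ 2 * c)
    (v ν : ℝ → H)
    (hv : ∀ t : ℝ, HasDerivAt v (ν t) t)
    (hν : ∀ t : ℝ, HasDerivAt ν (-(Ht t (v t))) t) :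
    ∀ t : ℝ,
      Real.sqrt (‖v t‖ ^ 2 + ‖ν t‖ ^ 2) ≤
        Real.exp (c * |t|) * Real.sqrt (‖v 0‖ ^ 2 + ‖ν 0‖ ^ 2) :=
  stmt_12_general Ht c hc hnorm v ν hv hν
end
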